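/- Let p ≥ 5 be an integer and let L'_n be the level words of the black metallic tree. Then for every n ∈ ℕ the number of nodes on level n equals b n, i.e. the length of L'_n equals b n; in particular the level counts satisfy |L'_{n+2}| = (p−2)·|L'_{n+1}| − |L'_n| with |L'_0| = 1 and |L'_1| = p−3. -/
import Mathlib


/-- The white metallic sequence: `m 0 = 1`, `m 1 = p - 2`,
`m (n+2) = (p-2) * m (n+1) - m n`. -/
def mseq (p : ℕ) : ℕ → ℤ
  | 0 => 1
  | 1 => (p : ℤ) - 2
  | n + 2 => ((p : ℤ) - 2) * mseq p (n + 1) - mseq p n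

/-- The black metallic sequence: `b 0 = 1`, `b 1 = p - 3`,
`b (n+2) = (p-2) * b (n+1) - b n`. -/
def bseq (p : ℕ) : ℕ → ℤ
  | 0 => 1
  | 1 => (p : ℤ) - 3
  | n + 2 => ((p : ℤ) - 2) * bseq p (n + 1) - bseq p n

/-- The two kinds of nodes of a metallic tree. -/
inductive Letter
  | B : Letter
  | W : Letter
deriving DecidableEq

/-- The generating rules: `B → B W^(p-4)` and `W → B W^(p-3)`. -/
def subst (p : ℕ) : Letter → List Letter
  | Letter.B => Letter.B :: List.replicate (p - 4) Letter.W
  | Letter.W => Letter.B :: List.replicate (p - 3) Letter.W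

/-- Level words of the white metallic tree (rooted at a white node). -/
def whiteLevel (p : ℕ) : ℕ → List Letter
  | 0 => [Letter.W]
  | n + 1 => (whiteLevel p n).flatMap (subst p)

/-- Level words of the black metallic tree (rooted at a black node). -/
def blackLevel (p : ℕ) : ℕ → List Letter
  | 0 => [Letter.B]
  | n + 1 => (blackLevel p n).flatMap (subst p)


lemma count_B_subst (p : ℕ) (a : Letter) : (subst p a).count Letter.B = 1 := by
  cases a <;> simp [subst, List.count_replicate, List.count_cons]

lemma count_B_flatMap (p : ℕ) (l : List Letter) :
    (l.flatMap (subst p)).count Letter.B = l.length := by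
  induction l with
  | nil => simp
  | cons a t ih =>
    rw [List.flatMap_cons, List.count_append, ih, count_B_subst, List.length_cons]
    omega

lemma length_flatMap (p : ℕ) (hp : 5 ≤ p) (l : List Letter) :
    ((l.flatMap (subst p)).length : ℤ)
      = ((p : ℤ) - 2) * l.length - l.count Letter.B := by
  induction l with
  | nil => simp
  | cons a t ih =>
    rw [List.flatMap_cons, List.length_append, List.count_cons, List.length_cons]
    have h4 : ((p - 4 : ℕ) : ℤ) = (p : ℤ) - 4 := by omega
    have h3 : ((p - 3 : ℕ) : ℤ) = (p : ℤ) - 3 := by omega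
    cases a <;>
      simp only [subst, List.length_cons, List.length_replicate] <;>
      push_cast [h4, h3, ih] <;> split_ifs <;> simp_all <;> ring

lemma black_len (p : ℕ) (hp : 5 ≤ p) (n : ℕ) :
    ((blackLevel p (n + 2)).length : ℤ)
      = ((p : ℤ) - 2) * ((blackLevel p (n + 1)).length : ℤ)
        - ((blackLevel p n).length : ℤ) := by
  have hc : (blackLevel p (n+1)).count Letter.B = (blackLevel p n).length :=
    count_B_flatMap p _
  show (((blackLevel p (n+1)).flatMap (subst p)).length : ℤ) = _
  rw [length_flatMap p hp, hc]

/-- for every `n`, the number of nodes on level `n` of the black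
metallic tree equals `b n`; in particular the level counts satisfy the induction
equation `|L' (n+2)| = (p-2)|L' (n+1)| - |L' n|` with `|L' 0| = 1` and `|L' 1| = p - 3`. -/
theorem black_level_length (p : ℕ) (hp : 5 ≤ p) :
    (∀ n : ℕ, ((blackLevel p n).length : ℤ) = bseq p n) ∧
    (∀ n : ℕ, ((blackLevel p (n + 2)).length : ℤ) =
      ((p : ℤ) - 2) * ((blackLevel p (n + 1)).length : ℤ)
        - ((blackLevel p n).length : ℤ)) ∧
    (blackLevel p 0).length = 1 ∧
    ((blackLevel p 1).length : ℤ) = (p : ℤ) - 3 := by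
  have h0 : (blackLevel p 0).length = 1 := rfl
  have h1 : ((blackLevel p 1).length : ℤ) = (p : ℤ) - 3 := by
    show (((blackLevel p 0).flatMap (subst p)).length : ℤ) = _
    rw [length_flatMap p hp]
    simp [blackLevel, List.count_cons]
    ring
  refine ⟨?_, black_len p hp, h0, h1⟩
  intro n
  induction n using Nat.strong_induction_on with
  | _ n ih =>
    match n with
    | 0 => simpa [bseq] using congrArg (Nat.cast : ℕ → ℤ) h0
    | 1 => rw [h1]; rfl
    | n + 2 =>
      rw [black_len p hp, ih (n+1) (by omega), ih n (by omega)]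
      rfl
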